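/- arXiv:math/0702291 — 5 statements merged into one kernel-verified Lean document; each statement's English description precedes it below -/
import Mathlib

section
/- Let Q be an n×n real matrix such that x^T Q x > 0 for all nonzero x ∈ ℝ^n. Then det(Q) ≥ det((Q + Qᵀ)/2), with equality if and only if Q is symmetric. -/
open Matrix

private lemma dot_self_pos {n : ℕ} {x : Fin n → ℝ} (hx : x ≠ 0) : 0 < x ⬝ᵥ x := by
  have h0 : 0 ≤ x ⬝ᵥ x := Finset.sum_nonneg fun i _ => mul_self_nonneg _
  rcases h0.lt_or_eq with h | h
  · exact h
  · exact absurd (dotProduct_self_eq_zero.mp h.symm) hx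

/-- A real matrix with positive definite quadratic form has positive determinant. -/
private lemma det_pos_of_quadform {n : ℕ} (M : Matrix (Fin n) (Fin n) ℝ)
    (h : ∀ x : Fin n → ℝ, x ≠ 0 → 0 < x ⬝ᵥ (M *ᵥ x)) : 0 < M.det := by
  set f : ℝ → ℝ := fun t => ((1 - t) • (1 : Matrix (Fin n) (Fin n) ℝ) + t • M).det with hf
  have hcont : Continuous f := by
    apply Continuous.matrix_det
    fun_prop
  have hq : ∀ t ∈ Set.Icc (0:ℝ) 1, ∀ x : Fin n → ℝ, x ≠ 0 →
      0 < x ⬝ᵥ (((1 - t) • (1 : Matrix (Fin n) (Fin n) ℝ) + t • M) *ᵥ x) := by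
    intro t ht x hx
    have h1 : x ⬝ᵥ (((1 - t) • (1 : Matrix (Fin n) (Fin n) ℝ) + t • M) *ᵥ x)
        = (1 - t) * (x ⬝ᵥ x) + t * (x ⬝ᵥ (M *ᵥ x)) := by
      rw [add_mulVec, dotProduct_add, smul_mulVec, smul_mulVec, one_mulVec,
        dotProduct_smul, dotProduct_smul, smul_eq_mul, smul_eq_mul]
    rw [h1]
    have h2 := dot_self_pos hx
    have h3 := h x hx
    obtain ⟨ht0, ht1⟩ := ht
    nlinarith [mul_nonneg ht0 h3.le, mul_nonneg (sub_nonneg.mpr ht1) h2.le,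
      mul_pos h2 h3]
  have hne : ∀ t ∈ Set.Icc (0:ℝ) 1, f t ≠ 0 := by
    intro t ht h0
    obtain ⟨v, hv, hv0⟩ := Matrix.exists_mulVec_eq_zero_iff.mpr h0
    have := hq t ht v hv
    rw [hv0] at this
    simp at this
  have hf0 : f 0 = 1 := by simp [hf]
  have hf1 : f 1 = M.det := by simp [hf]
  by_contra hcon
  push_neg at hcon
  have hM1 : f 1 < 0 := by
    rcases lt_or_eq_of_le hcon with h | h
    · rwa [hf1]
    · exact absurd (hf1.trans h) (hne 1 (by norm_num))
  have hIVT := intermediate_value_Icc' (by norm_num : (0:ℝ) ≤ 1) hcont.continuousOn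
  have h0mem : (0:ℝ) ∈ Set.Icc (f 1) (f 0) := ⟨hM1.le, by rw [hf0]; norm_num⟩
  obtain ⟨t, ht, hft⟩ := hIVT h0mem
  exact hne t ht hft

/-- For a real positive semidefinite `P`, `det (1 + P) ≥ 1`, with equality only if `P = 0`. -/
private lemma det_one_add_posSemidef {n : ℕ} {P : Matrix (Fin n) (Fin n) ℝ}
    (hP : P.PosSemidef) : 1 ≤ (1 + P).det ∧ ((1 + P).det = 1 → P = 0) := by
  have hH := hP.isHermitian
  have hspec := hH.spectral_theorem
  set U : Matrix (Fin n) (Fin n) ℝ := (Matrix.IsHermitian.eigenvectorUnitary hH : Matrix (Fin n) (Fin n) ℝ) with hU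
  set μ : Fin n → ℝ := hH.eigenvalues with hμ
  have hμ0 : ∀ i, 0 ≤ μ i := hP.eigenvalues_nonneg
  have hUU : U * star U = 1 :=
    Matrix.mem_unitaryGroup_iff.mp (Matrix.IsHermitian.eigenvectorUnitary hH).2
  have hDcast : (RCLike.ofReal ∘ μ : Fin n → ℝ) = μ := by
    funext i; simp
  have hspec' : P = U * diagonal μ * star U := by
    rw [hspec, hDcast]
    rfl
  have hfact : 1 + P = U * (1 + diagonal μ) * star U := by
    rw [mul_add, add_mul, mul_one, hUU, ← hspec']
  have hdet : (1 + P).det = ∏ i, (1 + μ i) := by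
    rw [hfact, det_mul, det_mul]
    have : U.det * (1 + diagonal μ).det * (star U).det
        = (1 + diagonal μ).det * (U * star U).det := by
      rw [det_mul]; ring
    rw [this, hUU, det_one, mul_one]
    rw [show (1 : Matrix (Fin n) (Fin n) ℝ) + diagonal μ = diagonal (fun i => 1 + μ i) by
      rw [← diagonal_one, diagonal_add]]
    rw [det_diagonal]
  have hone_le : ∀ i, (1:ℝ) ≤ 1 + μ i := fun i => by linarith [hμ0 i]
  have hprod_tail : ∀ s : Finset (Fin n), (1:ℝ) ≤ ∏ i ∈ s, (1 + μ i) := by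
    intro s
    calc (1:ℝ) = ∏ _i ∈ s, (1:ℝ) := by simp
    _ ≤ ∏ i ∈ s, (1 + μ i) :=
      Finset.prod_le_prod (fun i _ => zero_le_one) (fun i _ => hone_le i)
  constructor
  · rw [hdet]; exact hprod_tail Finset.univ
  · intro h1
    have hμz : ∀ i, μ i = 0 := by
      intro j
      have hsplit : ∏ i, (1 + μ i)
          = (1 + μ j) * ∏ i ∈ Finset.univ.erase j, (1 + μ i) :=
        (Finset.mul_prod_erase Finset.univ _ (Finset.mem_univ j)).symm
      have htail := hprod_tail (Finset.univ.erase j)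
      have h2 : (1 + μ j) * ∏ i ∈ Finset.univ.erase j, (1 + μ i) = 1 := by
        rw [← hsplit, ← hdet, h1]
      nlinarith [hμ0 j]
    have hdiag : diagonal μ = 0 := by
      ext i j
      simp [Matrix.diagonal_apply, hμz]
    rw [hspec', hdiag, mul_zero, zero_mul]

/-- If `Q` is a real `n×n` matrix with `xᵀ Q x > 0` for all nonzero `x`, then
`det Q ≥ det ((Q + Qᵀ)/2)`, with equality iff `Q` is symmetric. -/
theorem stmt0 (n : ℕ) (Q : Matrix (Fin n) (Fin n) ℝ)
    (hQ : ∀ x : Fin n → ℝ, x ≠ 0 → 0 < x ⬝ᵥ (Q *ᵥ x)) :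
    ((1 / 2 : ℝ) • (Q + Qᵀ)).det ≤ Q.det ∧
      (Q.det = ((1 / 2 : ℝ) • (Q + Qᵀ)).det ↔ Q = Qᵀ) := by
  classical
  set S : Matrix (Fin n) (Fin n) ℝ := (1 / 2 : ℝ) • (Q + Qᵀ) with hSdef
  have hQQT : ∀ x : Fin n → ℝ, x ⬝ᵥ (Qᵀ *ᵥ x) = x ⬝ᵥ (Q *ᵥ x) := by
    intro x
    rw [mulVec_transpose, dotProduct_comm, dotProduct_mulVec]
  have hST : Sᵀ = S := by
    rw [hSdef, transpose_smul, transpose_add, transpose_transpose, add_comm Qᵀ Q]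
  have hS : S.PosDef := by
    rw [posDef_iff_dotProduct_mulVec]
    constructor
    · rw [Matrix.IsHermitian, conjTranspose_eq_transpose_of_trivial, hST]
    · intro x hx
      have hxs : star x = x := by simp
      rw [hxs]
      have : x ⬝ᵥ (S *ᵥ x) = x ⬝ᵥ (Q *ᵥ x) := by
        rw [hSdef, smul_mulVec, dotProduct_smul, add_mulVec, dotProduct_add, hQQT,
          smul_eq_mul]
        ring
      rw [this]; exact hQ x hx
  have hSdet : 0 < S.det := hS.det_pos
  have hPSD := hS.posSemidef
  open scoped MatrixOrder in
  set R : Matrix (Fin n) (Fin n) ℝ := CFC.sqrt S with hRdef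
  open scoped MatrixOrder in
  have hRsq : R * R = S := CFC.sqrt_mul_sqrt_self S hPSD.nonneg
  have hRT : Rᵀ = R := by
    rw [← conjTranspose_eq_transpose_of_trivial]
    open scoped MatrixOrder in
    exact (CFC.sqrt_nonneg S).posSemidef.isHermitian
  have hRdet0 : R.det * R.det = S.det := by rw [← det_mul, hRsq]
  have hRne : R.det ≠ 0 := by
    intro h; rw [h, mul_zero] at hRdet0; exact hSdet.ne' hRdet0.symm
  have hRinv : R * R⁻¹ = 1 := mul_nonsing_inv R hRne.isUnit
  have hRinv' : R⁻¹ * R = 1 := nonsing_inv_mul R hRne.isUnit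
  set A : Matrix (Fin n) (Fin n) ℝ := Q - S with hAdef
  have hAT : Aᵀ = -A := by
    rw [hAdef, transpose_sub, hST, hSdef]
    module
  set K : Matrix (Fin n) (Fin n) ℝ := R⁻¹ * A * R⁻¹ with hKdef
  have hKT : Kᵀ = -K := by
    rw [hKdef, transpose_mul, transpose_mul, transpose_nonsing_inv, hRT, hAT]
    simp only [mul_neg, neg_mul, mul_assoc]
  have hRKR : R * K * R = A := by
    rw [hKdef]
    have h : R * (R⁻¹ * A * R⁻¹) * R = R * R⁻¹ * (A * (R⁻¹ * R)) := by
      simp only [mul_assoc]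
    rw [h, hRinv, hRinv', one_mul, mul_one]
  have hQfact : Q = R * (1 + K) * R := by
    have : R * (1 + K) * R = R * R + R * K * R := by noncomm_ring
    rw [this, hRsq, hRKR, hAdef]
    abel
  have hdetQ : Q.det = S.det * (1 + K).det := by
    rw [hQfact, det_mul, det_mul, ← hRsq, det_mul]
    ring
  -- K is skew, so 1 + K has positive definite quadratic form
  have hKskew : ∀ x : Fin n → ℝ, x ⬝ᵥ (K *ᵥ x) = 0 := by
    intro x
    have h1 : x ⬝ᵥ (Kᵀ *ᵥ x) = x ⬝ᵥ (K *ᵥ x) := by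
      rw [mulVec_transpose, dotProduct_comm, dotProduct_mulVec]
    rw [hKT, neg_mulVec, dotProduct_neg] at h1
    linarith
  have hdetK : 0 < (1 + K).det := by
    apply det_pos_of_quadform
    intro x hx
    rw [add_mulVec, dotProduct_add, one_mulVec, hKskew, add_zero]
    exact dot_self_pos hx
  have hPsd : (Kᵀ * K).PosSemidef := by
    have := posSemidef_conjTranspose_mul_self K
    rwa [conjTranspose_eq_transpose_of_trivial] at this
  have hsq : (1 + K).det * (1 + K).det = (1 + Kᵀ * K).det := by
    have h1 : (1 + K).det = (1 - K).det := by
      rw [← det_transpose (1 + K), transpose_add, transpose_one, hKT, ← sub_eq_add_neg]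
    have h3 : (1 + K) * (1 - K) = 1 + Kᵀ * K := by
      rw [hKT]; noncomm_ring
    calc (1 + K).det * (1 + K).det = (1 + K).det * (1 - K).det := by rw [← h1]
    _ = ((1 + K) * (1 - K)).det := (det_mul _ _).symm
    _ = (1 + Kᵀ * K).det := by rw [h3]
  obtain ⟨hge, heqc⟩ := det_one_add_posSemidef hPsd
  have h1K : 1 ≤ (1 + K).det := by nlinarith
  constructor
  · rw [hdetQ]; nlinarith
  · constructor
    · intro heq
      have hK1 : (1 + K).det = 1 := by
        rw [hdetQ] at heq
        have := mul_left_cancel₀ hSdet.ne' (by linarith [heq] : S.det * (1 + K).det = S.det * 1)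
        linarith [this]
      have hKK0 : Kᵀ * K = 0 := heqc (by nlinarith)
      have hK0 : K = 0 := by
        apply Matrix.conjTranspose_mul_self_eq_zero.mp
        rwa [conjTranspose_eq_transpose_of_trivial]
      have hQS : Q = S := by
        rw [hQfact, hK0, add_zero, mul_one, hRsq]
      rw [hQS]; exact hST.symm
    · intro h
      have hSQ : S = Q := by
        rw [hSdef, ← h]
        module
      rw [hSQ]
end

section
/- Let Q be an n×n real matrix with positive definite quadratic form, written as Q = S + A with S symmetric positive definite and A antisymmetric. If S is diagonal with diagonal entries λ₁,...,λₙ, then the coefficient of the terms in det(Q) containing exactly n−2 of the λᵢ equals Σ_{i<j} a_{ij}² λ₁···λ̂ᵢ···λ̂ⱼ···λₙ, which is nonnegative and strictly positive unless A = 0. -/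
/-!
Scaling by `diag λ` gives `det (diag λ + X • A) = (∏ λ) · det (1 + X • diag λ⁻¹ A)`, and the
coefficient of `X²` in `det (1 + X • M)` is the sum of the `2 × 2` principal minors of `M`.
Undoing the scaling, each pair `i < j` contributes its minor of `A` times the product of the
remaining `λₖ`, and the `2 × 2` principal minors of an antisymmetric matrix are `a_{ij}²`.
-/

open Matrix Polynomial Finset

theorem sum_powersetCard_two_eq_sum_Ioi {ι M : Type*} [Fintype ι] [LinearOrder ι]
    [LocallyFiniteOrderTop ι] [AddCommMonoid M] (f : Finset ι → M) :
    ∑ s ∈ univ.powersetCard 2, f s = ∑ i, ∑ j ∈ Ioi i, f {i, j} := by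
  rw [sum_sigma']
  symm
  refine sum_bij (fun x _ => {x.1, x.2}) ?_ ?_ ?_ fun _ _ => rfl
  · rintro ⟨i, j⟩ h
    simp only [mem_sigma, mem_Ioi] at h
    simp [mem_powersetCard, card_pair h.2.ne]
  · rintro ⟨a, b⟩ hab ⟨c, d⟩ hcd h
    simp only [mem_sigma, mem_univ, mem_Ioi, true_and] at hab hcd
    have h' := congrArg (fun s : Finset ι => (s : Set ι)) h
    simp only [coe_pair, Set.pair_eq_pair_iff] at h'
    rcases h' with ⟨rfl, rfl⟩ | ⟨rfl, rfl⟩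
    · rfl
    · exact absurd (hab.trans hcd) (lt_irrefl _)
  · intro s hs
    obtain ⟨a, b, hab, rfl⟩ := card_eq_two.mp (mem_powersetCard.mp hs).2
    rcases hab.lt_or_gt with h | h
    · exact ⟨⟨a, b⟩, by simpa using h, rfl⟩
    · exact ⟨⟨b, a⟩, by simpa using h, pair_comm b a⟩

namespace Matrix

theorem det_submatrix_pair {ι R : Type*} [LinearOrder ι] [CommRing R]
    (M : Matrix ι ι R) {a b : ι} (hab : a < b) :
    (M.submatrix (Subtype.val : ({a, b} : Finset ι) → ι) Subtype.val).det =
      M a a * M b b - M a b * M b a := by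
  rw [← det_submatrix_equiv_self (Fin.orderIsoPair a b hab).toEquiv, det_fin_two]
  simp

section Field

variable {ι K : Type*} [Fintype ι] [DecidableEq ι] [Field K] {d : ι → K}

theorem diagonal_map_C_add_X_smul_eq_mul (hd : ∀ i, d i ≠ 0) (M : Matrix ι ι K) :
    (diagonal d).map C + (X : K[X]) • M.map C =
      (diagonal d).map C * (1 + (X : K[X]) • (diagonal d⁻¹ * M).map C) := by
  have hdd : diagonal d * diagonal d⁻¹ = 1 := by
    rw [diagonal_mul_diagonal, ← diagonal_one]
    exact congrArg diagonal (funext fun i => mul_inv_cancel₀ (hd i))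
  rw [mul_add, mul_one, mul_smul_comm, ← Matrix.map_mul, ← mul_assoc, hdd, one_mul]

theorem coeff_det_diagonal_add_X_smul_eq_sum_minors (hd : ∀ i, d i ≠ 0) (M : Matrix ι ι K)
    (k : ℕ) :
    (det ((diagonal d).map C + (X : K[X]) • M.map C)).coeff k =
      ∑ s ∈ univ.powersetCard k,
        (M.submatrix (Subtype.val : s → ι) Subtype.val).det * ∏ i ∈ univ \ s, d i := by
  rw [diagonal_map_C_add_X_smul_eq_mul hd, det_mul, diagonal_map (map_zero C), det_diagonal,
    ← map_prod, coeff_C_mul, coeff_det_one_add_X_smul_eq_sum_minors, mul_sum]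
  refine sum_congr rfl fun s _ => ?_
  have hminor : (diagonal d⁻¹ * M).submatrix (Subtype.val : s → ι) Subtype.val =
      diagonal (fun i : s => (d i)⁻¹) * M.submatrix Subtype.val Subtype.val := by
    ext i j
    simp [diagonal_mul]
  rw [hminor, det_mul, det_diagonal, prod_coe_sort s (fun i => (d i)⁻¹),
    ← prod_sdiff (subset_univ s), prod_inv_distrib]
  field_simp [prod_ne_zero_iff.mpr fun i _ => hd i]

end Field

section Skew

variable {ι R : Type*} [AddGroup R] {A : Matrix ι ι R}

theorem apply_swap_of_transpose_eq_neg (hA : Aᵀ = -A) (i j : ι) : A j i = -A i j := by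
  simpa using congrFun (congrFun hA i) j

theorem apply_self_of_transpose_eq_neg [IsAddTorsionFree R] (hA : Aᵀ = -A) (i : ι) :
    A i i = 0 :=
  self_eq_neg.mp (apply_swap_of_transpose_eq_neg hA i i)

theorem exists_lt_apply_ne_zero_of_transpose_eq_neg [LinearOrder ι] [IsAddTorsionFree R]
    (hA : Aᵀ = -A) (hA0 : A ≠ 0) : ∃ i j, i < j ∧ A i j ≠ 0 := by
  obtain ⟨i, j, hij⟩ : ∃ i j, A i j ≠ 0 := by
    by_contra! h
    exact hA0 (Matrix.ext h)
  rcases lt_trichotomy i j with h | rfl | h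
  · exact ⟨i, j, h, hij⟩
  · exact absurd (apply_self_of_transpose_eq_neg hA i) hij
  · exact ⟨j, i, h, by rwa [apply_swap_of_transpose_eq_neg hA, neg_ne_zero]⟩

end Skew

end Matrix

/-- Write `Q = S + A` with `S = diag(λ)`, `λᵢ > 0`, and `A` antisymmetric. The terms in
`det Q` containing exactly `n−2` of the `λᵢ` (i.e. the coefficient of `X²` in
`det(diag λ + X·A)`) equal `∑_{i<j} a_{ij}² λ₁···λ̂ᵢ···λ̂ⱼ···λₙ`, which is nonnegative and
strictly positive unless `A = 0`. -/
theorem stmt1 (n : ℕ) (l : Fin n → ℝ) (hl : ∀ i, 0 < l i)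
    (A : Matrix (Fin n) (Fin n) ℝ) (hA : Aᵀ = -A) :
    (((Matrix.diagonal l).map Polynomial.C +
        (Polynomial.X : ℝ[X]) • A.map Polynomial.C).det).coeff 2 =
      ∑ i, ∑ j ∈ Finset.Ioi i, (A i j) ^ 2 * ∏ k ∈ Finset.univ \ {i, j}, l k ∧
    0 ≤ ∑ i, ∑ j ∈ Finset.Ioi i, (A i j) ^ 2 * ∏ k ∈ Finset.univ \ {i, j}, l k ∧
    (A ≠ 0 → 0 < ∑ i, ∑ j ∈ Finset.Ioi i, (A i j) ^ 2 * ∏ k ∈ Finset.univ \ {i, j}, l k) := by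
  have hterm : ∀ i, ∀ j ∈ Ioi i, 0 ≤ A i j ^ 2 * ∏ k ∈ univ \ {i, j}, l k := fun i j _ =>
    mul_nonneg (sq_nonneg _) (prod_nonneg fun k _ => (hl k).le)
  refine ⟨?_, sum_nonneg fun i _ => sum_nonneg (hterm i), fun hA0 => ?_⟩
  · rw [coeff_det_diagonal_add_X_smul_eq_sum_minors (fun i => (hl i).ne') A,
      sum_powersetCard_two_eq_sum_Ioi]
    refine sum_congr rfl fun i _ => sum_congr rfl fun j hj => ?_
    rw [det_submatrix_pair A (mem_Ioi.mp hj), apply_self_of_transpose_eq_neg hA,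
      apply_swap_of_transpose_eq_neg hA i j]
    ring
  · obtain ⟨i, j, hij, hAij⟩ := exists_lt_apply_ne_zero_of_transpose_eq_neg hA hA0
    refine sum_pos' (fun i _ => sum_nonneg (hterm i)) ⟨i, mem_univ i, ?_⟩
    refine sum_pos' (hterm i) ⟨j, mem_Ioi.mpr hij, ?_⟩
    exact mul_pos (by positivity) (prod_pos fun k _ => hl k)
end

section
/- For c > 0, the n-form Φ_c = (1/2)[c·dx₁∧···∧dxₙ + (1/c)·dy₁∧···∧dyₙ] on ℝⁿ×ℝⁿ evaluated on the frame ξᵢ = ∂_{xᵢ} + Σⱼ Q_{ij} ∂_{yⱼ} equals (1/2)[c + det(Q)/c]. If ξ is space-like (i.e., (Q+Qᵀ)/2 positive definite), then Φ_c(ξ₁∧···∧ξₙ) ≥ Vol(ξ₁∧···∧ξₙ) = √(det((Q+Qᵀ)/2)), with equality iff Q = Qᵀ and det(Q) = c². -/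
open Matrix

section Aux
open Finset
open scoped MatrixOrder
variable {m : Type*} [Fintype m] [DecidableEq m]

lemma my_det_one_add_psd {B : Matrix m m ℝ} (hB : B.PosSemidef) :
    1 ≤ (1 + B).det ∧ ((1 + B).det = 1 ↔ B = 0) := by
  set U : Matrix m m ℝ := (hB.1.eigenvectorUnitary : Matrix m m ℝ) with hUdef
  have hU : U * star U = 1 := mem_unitaryGroup_iff.mp (IsHermitian.eigenvectorUnitary hB.1).2
  set μ : m → ℝ := hB.1.eigenvalues with hμdef
  have hofreal : (RCLike.ofReal ∘ μ : m → ℝ) = μ := by funext i; simp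
  have hspec : B = U * diagonal μ * star U := by
    have := hB.1.spectral_theorem
    rwa [hofreal] at this
  have hdiag : (diagonal fun i => 1 + μ i : Matrix m m ℝ) = 1 + diagonal μ := by
    rw [← diagonal_one, diagonal_add]
  have h1 : (1 : Matrix m m ℝ) + B = U * diagonal (fun i => 1 + μ i) * star U := by
    rw [hdiag, mul_add, add_mul, mul_one, hU, ← hspec]
  have h2 : U.det * (star U).det = 1 := by rw [← det_mul, hU, det_one]
  have key : (1 + B).det = ∏ i, (1 + μ i) := by
    calc (1 + B).det = U.det * (diagonal fun i => 1 + μ i).det * (star U).det := by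
          rw [h1, det_mul, det_mul]
      _ = (diagonal fun i => 1 + μ i).det * (U.det * (star U).det) := by ring
      _ = ∏ i, (1 + μ i) := by rw [h2, mul_one, det_diagonal]
  have hfac : ∀ i, (1:ℝ) ≤ 1 + μ i := fun i => by linarith [hB.eigenvalues_nonneg i]
  have hge : (1:ℝ) ≤ ∏ i, (1 + μ i) := by
    calc (1:ℝ) = ∏ _i : m, 1 := by simp
      _ ≤ ∏ i, (1 + μ i) := Finset.prod_le_prod (by intros; norm_num) (fun i _ => hfac i)
  refine ⟨key ▸ hge, ?_, ?_⟩
  · intro h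
    rw [key] at h
    have hall : ∀ i, μ i = 0 := by
      by_contra hne
      push_neg at hne
      obtain ⟨j, hj⟩ := hne
      have hjpos : 0 < μ j := lt_of_le_of_ne (hB.eigenvalues_nonneg j) (Ne.symm hj)
      have hrest : (1:ℝ) ≤ ∏ i ∈ univ.erase j, (1 + μ i) := by
        calc (1:ℝ) = ∏ _i ∈ univ.erase j, 1 := by simp
          _ ≤ _ := Finset.prod_le_prod (by intros; norm_num) (fun i _ => hfac i)
      have hsplit := Finset.mul_prod_erase univ (fun i => 1 + μ i) (mem_univ j)
      nlinarith
    have : diagonal μ = 0 := by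
      ext i j
      simp [diagonal_apply, hall]
    rw [hspec, this, mul_zero, zero_mul]
  · rintro rfl; simp

lemma my_det_add_psd {A B : Matrix m m ℝ} (hA : A.PosDef) (hB : B.PosSemidef) :
    A.det ≤ (A + B).det ∧ ((A + B).det = A.det ↔ B = 0) := by
  have hApsd := hA.posSemidef
  set S := CFC.sqrt A with hSdef
  have hSS : S * S = A := CFC.sqrt_mul_sqrt_self A hApsd.nonneg
  have hdetA : 0 < A.det := hA.det_pos
  have hSdet : S.det * S.det = A.det := by rw [← det_mul, hSS]
  have hSdet_ne : S.det ≠ 0 := by intro h; rw [h, mul_zero] at hSdet; exact hdetA.ne' hSdet.symm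
  have hSunit : IsUnit S.det := hSdet_ne.isUnit
  have hSinvH : (S⁻¹)ᴴ = S⁻¹ := (CFC.sqrt_nonneg A).posSemidef.1.inv
  set M := S⁻¹ * B * S⁻¹ with hMdef
  have hM : M.PosSemidef := by
    have := hB.mul_mul_conjTranspose_same S⁻¹
    rwa [hSinvH] at this
  have hSMS : S * M * S = B := by
    rw [hMdef, ← mul_assoc, ← mul_assoc, Matrix.mul_nonsing_inv S hSunit, one_mul,
      mul_assoc, Matrix.nonsing_inv_mul S hSunit, mul_one]
  have key : A + B = S * (1 + M) * S := by
    rw [mul_add, mul_one, add_mul, hSS, hSMS]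
  have hdet : (A + B).det = (1 + M).det * A.det := by
    rw [key, det_mul, det_mul]; rw [← hSdet]; ring
  obtain ⟨h1, h2⟩ := my_det_one_add_psd hM
  constructor
  · rw [hdet]; nlinarith
  · constructor
    · intro h
      rw [hdet] at h
      have : (1 + M).det = 1 := by
        have h' : (1 + M).det * A.det = 1 * A.det := by rw [h, one_mul]
        exact mul_right_cancel₀ hdetA.ne' h'
      have hM0 : M = 0 := h2.mp this
      rw [← hSMS, hM0, mul_zero, zero_mul]
    · rintro rfl; simp

lemma my_skew_dot {K : Matrix m m ℝ} (hK : Kᵀ = -K) (v : m → ℝ) :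
    v ⬝ᵥ K *ᵥ v = 0 := by
  have h : v ⬝ᵥ K *ᵥ v = -(v ⬝ᵥ K *ᵥ v) := by
    calc v ⬝ᵥ K *ᵥ v = (K *ᵥ v) ⬝ᵥ v := dotProduct_comm _ _
      _ = (v ᵥ* Kᵀ) ⬝ᵥ v := by rw [vecMul_transpose]
      _ = (v ᵥ* (-K)) ⬝ᵥ v := by rw [hK]
      _ = -(v ⬝ᵥ K *ᵥ v) := by
          rw [vecMul_neg, neg_dotProduct, dotProduct_mulVec]
  linarith

lemma my_det_pos_core {S K : Matrix m m ℝ} (hS : S.PosDef) (hK : Kᵀ = -K) :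
    0 < (S + K).det := by
  have hne : ∀ t : ℝ, (S + t • K).det ≠ 0 := by
    intro t h0
    obtain ⟨v, hv0, hv⟩ := (exists_mulVec_eq_zero_iff).mpr h0
    have h1 : v ⬝ᵥ (S + t • K) *ᵥ v = 0 := by rw [hv, dotProduct_zero]
    have h2 : v ⬝ᵥ K *ᵥ v = 0 := my_skew_dot hK v
    have e : v ⬝ᵥ (S + t • K) *ᵥ v = v ⬝ᵥ S *ᵥ v + t * (v ⬝ᵥ K *ᵥ v) := by
      rw [add_mulVec, dotProduct_add, smul_mulVec, dotProduct_smul, smul_eq_mul]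
    rw [e, h2, mul_zero, add_zero] at h1
    have h4 : 0 < v ⬝ᵥ S *ᵥ v := by
      have := hS.dotProduct_mulVec_pos hv0
      rwa [star_trivial] at this
    linarith
  have hf : Continuous fun t : ℝ => (S + t • K).det := by
    apply Continuous.matrix_det
    exact continuous_const.add (continuous_id.smul continuous_const)
  have hSpos : 0 < S.det := hS.det_pos
  by_contra hle
  push_neg at hle
  have hQne : (S + K).det ≠ 0 := by
    have := hne 1; rwa [one_smul] at this
  have hQlt : (S + K).det < 0 := lt_of_le_of_ne hle hQne
  have hmem : (0:ℝ) ∈ Set.Icc ((fun t : ℝ => (S + t • K).det) 1)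
      ((fun t : ℝ => (S + t • K).det) 0) := by
    simp only [one_smul, zero_smul, add_zero]
    exact ⟨hQlt.le, hSpos.le⟩
  obtain ⟨t, _, ht⟩ := intermediate_value_Icc' (by norm_num : (0:ℝ) ≤ 1) hf.continuousOn hmem
  exact hne t ht

lemma my_OT_core {S K : Matrix m m ℝ} (hS : S.PosDef) (hK : Kᵀ = -K) :
    S.det ≤ (S + K).det ∧ ((S + K).det = S.det ↔ K = 0) := by
  have hST : Sᵀ = S := by
    rw [← conjTranspose_eq_transpose_of_trivial]
    exact hS.isHermitian
  have hQT : (S + K)ᵀ = S - K := by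
    rw [transpose_add, hK, hST, sub_eq_add_neg]
  have hSpos : 0 < S.det := hS.det_pos
  have hQpos : 0 < (S + K).det := my_det_pos_core hS hK
  have hSunit : IsUnit S.det := hSpos.ne'.isUnit
  have hSinv : (S⁻¹).PosDef := hS.inv
  set B : Matrix m m ℝ := Kᵀ * S⁻¹ * K with hBdef
  have hB : B.PosSemidef := by
    have := hSinv.posSemidef.conjTranspose_mul_mul_same K
    rwa [conjTranspose_eq_transpose_of_trivial] at this
  have hid : (S + K) * S⁻¹ * (S + K)ᵀ = S + B := by
    rw [hQT, hBdef, hK]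
    rw [add_mul, Matrix.mul_nonsing_inv S hSunit, add_mul, one_mul, mul_sub,
      mul_assoc K S⁻¹ S, Matrix.nonsing_inv_mul S hSunit, mul_one, neg_mul, neg_mul]
    abel
  have hdet2 : (S + K).det * (S + K).det = (S + B).det * S.det := by
    have h := congrArg Matrix.det hid
    rw [det_mul, det_mul, det_transpose, det_nonsing_inv, Ring.inverse_eq_inv] at h
    field_simp at h
    linarith [h]
  obtain ⟨hle, heq⟩ := my_det_add_psd hS hB
  have hK0 : B = 0 → K = 0 := by
    intro hB0
    by_contra hKne
    have hex : ∃ i j, K i j ≠ 0 := by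
      by_contra hall
      push_neg at hall
      exact hKne (by ext i j; simp [hall])
    obtain ⟨i, j, hij⟩ := hex
    set v : m → ℝ := K *ᵥ Pi.single j 1 with hvdef
    have hvne : v ≠ 0 := by
      intro hv0
      apply hij
      have hvi : v i = 0 := by rw [hv0]; rfl
      rw [hvdef, mulVec_single] at hvi
      simpa using hvi
    have hpos : 0 < v ⬝ᵥ S⁻¹ *ᵥ v := by
      have := hSinv.dotProduct_mulVec_pos hvne
      rwa [star_trivial] at this
    have hzero : (Pi.single j 1 : m → ℝ) ⬝ᵥ B *ᵥ Pi.single j 1 = 0 := by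
      rw [hB0]; simp
    have hcalc : (Pi.single j 1 : m → ℝ) ⬝ᵥ B *ᵥ Pi.single j 1 = v ⬝ᵥ S⁻¹ *ᵥ v := by
      calc (Pi.single j 1 : m → ℝ) ⬝ᵥ B *ᵥ Pi.single j 1
          = (Pi.single j 1 : m → ℝ) ⬝ᵥ Kᵀ *ᵥ ((S⁻¹ * K) *ᵥ Pi.single j 1) := by
            rw [hBdef, mulVec_mulVec, mul_assoc]
        _ = ((Pi.single j 1 : m → ℝ) ᵥ* Kᵀ) ⬝ᵥ ((S⁻¹ * K) *ᵥ Pi.single j 1) :=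
            dotProduct_mulVec _ _ _
        _ = v ⬝ᵥ S⁻¹ *ᵥ v := by
            rw [vecMul_transpose, ← hvdef, ← mulVec_mulVec, ← hvdef]
    rw [hcalc] at hzero
    linarith
  constructor
  · nlinarith
  · constructor
    · intro h
      have hSB : (S + B).det = S.det := by
        have h2 : (S + B).det * S.det = S.det * S.det := by rw [← hdet2, h]
        exact mul_right_cancel₀ hSpos.ne' h2
      exact hK0 (heq.mp hSB)
    · rintro rfl
      rw [add_zero]

end Aux

/-- The calibration `Φ_c = (1/2)[c·dx + (1/c)·dy]` evaluated on the frame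
`ξᵢ = ∂_{xᵢ} + Σⱼ Q i j ∂_{yⱼ}` equals `(1/2)(c + det Q / c)`; if the plane is space-like
then `Φ_c(ξ) ≥ Vol(ξ) = √(det((Q+Qᵀ)/2))`, with equality iff `Q = Qᵀ` and `det Q = c²`. -/
theorem stmt7 (n : ℕ) (c : ℝ) (hc : 0 < c) (Q : Matrix (Fin n) (Fin n) ℝ)
    (hQ : ((1 / 2 : ℝ) • (Q + Qᵀ)).PosDef)
    (ξ : Fin n → (Fin n → ℝ) × (Fin n → ℝ))
    (hξ : ∀ i, ξ i = (fun j => if j = i then 1 else 0, fun j => Q i j))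
    (Phi : ℝ)
    (hPhi : Phi = (1 / 2) * (c * (Matrix.of fun i j => (ξ i).1 j).det +
      (1 / c) * (Matrix.of fun i j => (ξ i).2 j).det)) :
    Phi = (1 / 2) * (c + Q.det / c) ∧
      Real.sqrt ((1 / 2 : ℝ) • (Q + Qᵀ)).det ≤ Phi ∧
      (Phi = Real.sqrt ((1 / 2 : ℝ) • (Q + Qᵀ)).det ↔ Q = Qᵀ ∧ Q.det = c ^ 2) := by
  have hM1 : (Matrix.of fun i j => (ξ i).1 j) = (1 : Matrix (Fin n) (Fin n) ℝ) := by
    ext i j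
    simp only [hξ, Matrix.of_apply, Matrix.one_apply, eq_comm]
  have hM2 : (Matrix.of fun i j => (ξ i).2 j) = Q := by
    ext i j
    simp only [hξ, Matrix.of_apply]
  have hPhi' : Phi = (1 / 2) * (c + Q.det / c) := by
    rw [hPhi, hM1, hM2, det_one]
    field_simp
  have hK : (Q - (1 / 2 : ℝ) • (Q + Qᵀ))ᵀ = -(Q - (1 / 2 : ℝ) • (Q + Qᵀ)) := by
    ext i j
    simp [Matrix.transpose_apply, Matrix.sub_apply, Matrix.add_apply]
    ring
  have hSK : (1 / 2 : ℝ) • (Q + Qᵀ) + (Q - (1 / 2 : ℝ) • (Q + Qᵀ)) = Q := by abel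
  have hOT := my_OT_core hQ hK
  rw [hSK] at hOT
  have hDpos : 0 < Q.det := by
    have := my_det_pos_core hQ hK
    rwa [hSK] at this
  have hSpos : 0 < ((1 / 2 : ℝ) • (Q + Qᵀ)).det := hQ.det_pos
  have hKiff : Q - (1 / 2 : ℝ) • (Q + Qᵀ) = 0 ↔ Q = Qᵀ := by
    constructor
    · intro h
      have hQS : Q = (1 / 2 : ℝ) • (Q + Qᵀ) := by
        have := sub_eq_zero.mp h
        exact this
      ext i j
      have h1 := congrFun (congrFun hQS i) j
      simp only [Matrix.smul_apply, Matrix.add_apply, Matrix.transpose_apply,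
        smul_eq_mul] at h1
      rw [Matrix.transpose_apply]
      linarith
    · intro h
      ext i j
      have he := congrFun (congrFun h j) i
      rw [Matrix.transpose_apply] at he
      simp only [Matrix.sub_apply, Matrix.smul_apply, Matrix.add_apply,
        Matrix.transpose_apply, smul_eq_mul, Matrix.zero_apply]
      linarith
  have hiff : Q.det = ((1 / 2 : ℝ) • (Q + Qᵀ)).det ↔ Q = Qᵀ := hOT.2.trans hKiff
  set s : ℝ := Real.sqrt Q.det with hsdef
  have hsq : s ^ 2 = Q.det := Real.sq_sqrt hDpos.le
  have hsnn : 0 ≤ s := Real.sqrt_nonneg _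
  have hspos : 0 < s := Real.sqrt_pos.mpr hDpos
  have hident : (1 / 2) * (c + Q.det / c) - s = (s - c) ^ 2 / (2 * c) := by
    rw [← hsq]
    field_simp
    ring
  have h2 : s ≤ (1 / 2) * (c + Q.det / c) := by
    have hnn : 0 ≤ (s - c) ^ 2 / (2 * c) := div_nonneg (sq_nonneg _) (by linarith)
    linarith
  have h1 : Real.sqrt ((1 / 2 : ℝ) • (Q + Qᵀ)).det ≤ s := Real.sqrt_le_sqrt hOT.1
  refine ⟨hPhi', by linarith, ?_, ?_⟩
  · intro h
    have e2 : s = Phi := le_antisymm (hPhi' ▸ h2) (h ▸ h1)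
    have e1 : Real.sqrt ((1 / 2 : ℝ) • (Q + Qᵀ)).det = s := le_antisymm h1 (by rw [e2, h])
    have hdets : Q.det = ((1 / 2 : ℝ) • (Q + Qᵀ)).det :=
      ((Real.sqrt_inj hSpos.le hDpos.le).mp e1).symm
    refine ⟨hiff.mp hdets, ?_⟩
    have heq : s = (1 / 2) * (c + Q.det / c) := by rw [e2, hPhi']
    have hzero : (s - c) ^ 2 / (2 * c) = 0 := by linarith
    have hsc : s = c := by
      field_simp at hzero
      nlinarith [sq_nonneg (s - c)]
    rw [← hsq, hsc]
  · rintro ⟨hsym, hdet⟩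
    have hSQ : (1 / 2 : ℝ) • (Q + Qᵀ) = Q := by
      rw [← hsym]
      ext i j
      simp [Matrix.add_apply]
      ring
    rw [hPhi', hSQ, hdet]
    rw [show (1 / 2) * (c + c ^ 2 / c) = c by field_simp; ring]
    rw [Real.sqrt_sq hc.le]
end

section
/- Let F : Ω → ℝⁿ be C¹ on a bounded open Ω ⊂ ℝⁿ with the symmetric part of DF positive definite everywhere (space-like graph). Then for any c > 0, the volume of the graph of F satisfies Vol ≤ ∫_Ω (1/2)[c + det(DF(x))/c] dx, with equality iff DF is symmetric with det DF = c² everywhere. -/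
open Matrix MeasureTheory

lemma det_one_add_psd {n : ℕ} {P : Matrix (Fin n) (Fin n) ℝ} (hP : P.PosSemidef) :
    1 ≤ (1 + P).det ∧ ((1 + P).det = 1 ↔ P = 0) := by
  have hH := hP.1
  set U : Matrix (Fin n) (Fin n) ℝ := (hH.eigenvectorUnitary : Matrix (Fin n) (Fin n) ℝ) with hU
  have hUs : U * star U = 1 := (Matrix.mem_unitaryGroup_iff).mp hH.eigenvectorUnitary.2
  have hspec : P = U * diagonal (RCLike.ofReal ∘ hH.eigenvalues) * star U := hH.spectral_theorem
  have hofReal : (RCLike.ofReal ∘ hH.eigenvalues : Fin n → ℝ) = hH.eigenvalues := rfl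
  rw [hofReal] at hspec
  have h1 : (1 : Matrix (Fin n) (Fin n) ℝ) + P
      = U * diagonal (fun i => 1 + hH.eigenvalues i) * star U := by
    have hd : (diagonal (fun i => 1 + hH.eigenvalues i) : Matrix (Fin n) (Fin n) ℝ)
        = 1 + diagonal hH.eigenvalues := by
      rw [← diagonal_one, ← diagonal_add]
    rw [hd, mul_add, mul_one, add_mul, hUs, ← hspec]
  have hdet : (1 + P).det = ∏ i, (1 + hH.eigenvalues i) := by
    rw [h1, det_mul_right_comm, hUs, one_mul, det_diagonal]
  have hnn : ∀ i : Fin n, (0:ℝ) ≤ hH.eigenvalues i := hP.eigenvalues_nonneg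
  constructor
  · rw [hdet]
    calc (1:ℝ) = ∏ _i : Fin n, 1 := by simp
      _ ≤ ∏ i, (1 + hH.eigenvalues i) :=
        Finset.prod_le_prod (fun i _ => zero_le_one) (fun i _ => by linarith [hnn i])
  · constructor
    · intro h
      have hall : ∀ i, hH.eigenvalues i = 0 := by
        by_contra hcon
        push_neg at hcon
        obtain ⟨j, hj⟩ := hcon
        have hjpos : 0 < hH.eigenvalues j := lt_of_le_of_ne (hnn j) (Ne.symm hj)
        have : (1:ℝ) < ∏ i, (1 + hH.eigenvalues i) := by
          have := Finset.prod_lt_prod (f := fun _ : Fin n => (1:ℝ))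
            (g := fun i => 1 + hH.eigenvalues i) (s := Finset.univ)
            (fun i _ => one_pos) (fun i _ => by linarith [hnn i])
            ⟨j, Finset.mem_univ j, by linarith⟩
          simpa using this
        rw [hdet] at h; linarith
      have : (diagonal hH.eigenvalues : Matrix (Fin n) (Fin n) ℝ) = 0 := by
        ext i k
        by_cases hik : i = k <;> simp [diagonal, hik, hall]
      rw [hspec, this, mul_zero, zero_mul]
    · rintro rfl
      simp

lemma det_one_add_skew {n : ℕ} {M : Matrix (Fin n) (Fin n) ℝ} (hM : Mᵀ = -M) :
    1 ≤ (1 + M).det ∧ ((1 + M).det = 1 ↔ M = 0) := by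
  have psd : ∀ t : ℝ, ((t • M)ᵀ * (t • M)).PosSemidef := by
    intro t
    have := posSemidef_conjTranspose_mul_self (t • M)
    rwa [conjTranspose_eq_transpose_of_trivial] at this
  have key : ∀ t : ℝ, ((1 + t • M).det) ^ 2 = (1 + (t • M)ᵀ * (t • M)).det := by
    intro t
    have ht : (t • M)ᵀ = -(t • M) := by rw [transpose_smul, hM, smul_neg]
    have hmul : (1 + t • M) * (1 + t • M)ᵀ = 1 + (t • M)ᵀ * (t • M) := by
      rw [transpose_add, transpose_one, ht, neg_mul, ← sub_eq_add_neg, ← sub_eq_add_neg,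
        mul_sub, mul_one, add_mul, one_mul]
      abel
    calc ((1 + t • M).det) ^ 2 = (1 + t • M).det * ((1 + t • M)ᵀ).det := by
          rw [det_transpose]; ring
      _ = ((1 + t • M) * (1 + t • M)ᵀ).det := (det_mul _ _).symm
      _ = (1 + (t • M)ᵀ * (t • M)).det := by rw [hmul]
  have sq1 : ∀ t : ℝ, 1 ≤ ((1 + t • M).det) ^ 2 := fun t =>
    (key t).symm ▸ (det_one_add_psd (psd t)).1
  have nonzero : ∀ t : ℝ, (1 + t • M).det ≠ 0 := by
    intro t h
    have := sq1 t
    rw [h] at this; norm_num at this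
  have cont : Continuous fun t : ℝ => (1 + t • M).det :=
    Continuous.matrix_det (continuous_const.add (continuous_id.smul continuous_const))
  have f0 : (fun t : ℝ => (1 + t • M).det) 0 = 1 := by simp
  have pos : 0 < (1 + M).det := by
    by_contra hle
    push_neg at hle
    have hlt : (1 + M).det < 0 := lt_of_le_of_ne hle (by simpa using nonzero 1)
    have hsub : Set.Icc ((fun t : ℝ => (1 + t • M).det) 1) ((fun t : ℝ => (1 + t • M).det) 0)
        ⊆ (fun t : ℝ => (1 + t • M).det) '' Set.Icc 0 1 :=
      intermediate_value_Icc' (by norm_num) cont.continuousOn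
    have h0 : (0:ℝ) ∈ Set.Icc ((fun t : ℝ => (1 + t • M).det) 1)
        ((fun t : ℝ => (1 + t • M).det) 0) := by
      simp only [one_smul, f0]
      exact ⟨le_of_lt hlt, zero_le_one⟩
    obtain ⟨t, _, ht⟩ := hsub h0
    exact nonzero t ht
  have hone : (1:ℝ) ≤ (1 + M).det := by
    have := sq1 1
    rw [one_smul] at this
    nlinarith
  refine ⟨hone, ?_, by rintro rfl; simp⟩
  intro h
  have hsq : (1 + Mᵀ * M).det = 1 := by
    have := key 1
    rw [one_smul] at this
    rw [← this, h]; norm_num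
  have hMM : Mᵀ * M = 0 := by
    have hpsd := psd 1
    rw [one_smul] at hpsd
    exact ((det_one_add_psd hpsd).2).mp hsq
  have : Mᴴ * M = 0 := by rwa [conjTranspose_eq_transpose_of_trivial]
  exact conjTranspose_mul_self_eq_zero.mp this

open scoped MatrixOrder in
lemma ostrowski_taussky {n : ℕ} {A : Matrix (Fin n) (Fin n) ℝ}
    (hS : ((1/2:ℝ) • (A + Aᵀ)).PosDef) :
    ((1/2:ℝ) • (A + Aᵀ)).det ≤ A.det ∧ (((1/2:ℝ) • (A + Aᵀ)).det = A.det ↔ A = Aᵀ) := by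
  set S : Matrix (Fin n) (Fin n) ℝ := (1/2:ℝ) • (A + Aᵀ) with hSdef
  set K : Matrix (Fin n) (Fin n) ℝ := (1/2:ℝ) • (A - Aᵀ) with hKdef
  have hSK : S + K = A := by rw [hSdef, hKdef]; module
  have hKt : Kᵀ = -K := by
    rw [hKdef, transpose_smul, transpose_sub, transpose_transpose]; module
  set R : Matrix (Fin n) (Fin n) ℝ := CFC.sqrt S with hRdef
  have hRsq : R * R = S := CFC.sqrt_mul_sqrt_self S hS.posSemidef.nonneg
  have hRt : Rᵀ = R := by
    have := (CFC.sqrt_nonneg S).posSemidef.1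
    rwa [IsHermitian, conjTranspose_eq_transpose_of_trivial] at this
  have hdetRR : R.det * R.det = S.det := by rw [← det_mul, hRsq]
  have hdetR : R.det ≠ 0 := by
    intro h
    have := hS.det_pos
    rw [← hdetRR, h] at this; norm_num at this
  have hRu : IsUnit R.det := isUnit_iff_ne_zero.mpr hdetR
  have hRinv : R * R⁻¹ = 1 := mul_nonsing_inv R hRu
  have hRinv' : R⁻¹ * R = 1 := nonsing_inv_mul R hRu
  have hRit : (R⁻¹)ᵀ = R⁻¹ := by rw [transpose_nonsing_inv, hRt]
  set M : Matrix (Fin n) (Fin n) ℝ := R⁻¹ * K * R⁻¹ with hMdef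
  have hMt : Mᵀ = -M := by
    rw [hMdef, transpose_mul, transpose_mul, hRit, hKt]
    simp [Matrix.mul_assoc]
  have hRMR : R * M * R = K := by
    rw [hMdef]
    calc R * (R⁻¹ * K * R⁻¹) * R = (R * R⁻¹) * K * (R⁻¹ * R) := by
          simp only [Matrix.mul_assoc]
      _ = K := by rw [hRinv, hRinv', one_mul, mul_one]
  have hA : A = R * (1 + M) * R := by
    rw [mul_add, mul_one, add_mul, hRsq, hRMR, hSK]
  have hdetA : A.det = S.det * (1 + M).det := by
    rw [hA, det_mul, det_mul]
    rw [← hdetRR]; ring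
  obtain ⟨h1M, h2M⟩ := det_one_add_skew hMt
  have hSpos : 0 < S.det := hS.det_pos
  constructor
  · nlinarith
  · constructor
    · intro h
      have hdet1 : (1 + M).det = 1 := by
        have : S.det * 1 = S.det * (1 + M).det := by rw [mul_one, ← hdetA, h]
        exact (mul_left_cancel₀ (ne_of_gt hSpos) this).symm
      have hM0 : M = 0 := h2M.mp hdet1
      have hK0 : K = 0 := by rw [← hRMR, hM0, mul_zero, zero_mul]
      have : A - Aᵀ = 0 := by
        have := hK0
        rw [hKdef] at this
        simpa using (smul_eq_zero.mp this).resolve_left (by norm_num)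
      linear_combination (norm := abel) this
    · intro h
      have : K = 0 := by rw [hKdef, ← h]; simp
      have hM0 : M = 0 := by rw [hMdef, this, mul_zero, zero_mul]
      rw [hdetA, hM0]; simp

lemma pointwise_ineq {n : ℕ} {A : Matrix (Fin n) (Fin n) ℝ}
    (hS : ((1/2:ℝ) • (A + Aᵀ)).PosDef) {c : ℝ} (hc : 0 < c) :
    Real.sqrt (((1/2:ℝ) • (A + Aᵀ)).det) ≤ (1/2) * (c + A.det / c) ∧
      (Real.sqrt (((1/2:ℝ) • (A + Aᵀ)).det) = (1/2) * (c + A.det / c) ↔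
        A = Aᵀ ∧ A.det = c ^ 2) := by
  obtain ⟨hle, hiff⟩ := ostrowski_taussky hS
  have hSpos : 0 < ((1/2:ℝ) • (A + Aᵀ)).det := hS.det_pos
  have hApos : 0 < A.det := lt_of_lt_of_le hSpos hle
  set dS := ((1/2:ℝ) • (A + Aᵀ)).det
  set dA := A.det
  set sA := Real.sqrt dA with hsA
  have hsAnn : 0 ≤ sA := Real.sqrt_nonneg _
  have hsq : sA ^ 2 = dA := Real.sq_sqrt hApos.le
  have hmono : Real.sqrt dS ≤ sA := Real.sqrt_le_sqrt hle
  have hrhs : (1/2) * (c + dA / c) = (c ^ 2 + dA) / (2 * c) := by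
    field_simp
  have key : 2 * c * sA ≤ c ^ 2 + dA := by nlinarith [sq_nonneg (sA - c)]
  have hAMGM : sA ≤ (1/2) * (c + dA / c) := by
    rw [hrhs, le_div_iff₀ (by positivity)]
    linarith
  refine ⟨le_trans hmono hAMGM, ?_, ?_⟩
  · intro h
    have h1 : Real.sqrt dS = sA := le_antisymm hmono (by linarith [h ▸ hAMGM])
    have hdSA : dS = dA := by
      have := congrArg (fun x => x ^ 2) h1
      simpa [Real.sq_sqrt hSpos.le, hsq] using this
    have h2 : sA = (1/2) * (c + dA / c) := by rw [← h1, h]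
    have h3 : 2 * c * sA = c ^ 2 + dA := by
      rw [hrhs] at h2
      field_simp at h2
      linarith
    have h4 : sA = c := by nlinarith [sq_nonneg (sA - c)]
    exact ⟨hiff.mp hdSA, by rw [← hsq, h4]⟩
  · rintro ⟨hsym, hdet⟩
    have hdSA : dS = dA := hiff.mpr hsym
    have : Real.sqrt dS = c := by
      rw [hdSA, show dA = c ^ 2 from hdet, Real.sqrt_sq hc.le]
    rw [this, show dA = c ^ 2 from hdet]
    field_simp
    ring


/-- If `F : Ω → ℝⁿ` is `C¹` with space-like graph (symmetric part of `DF` positive definite),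
then for any `c > 0` the graph volume `∫_Ω √(det((DF+DFᵀ)/2))` is at most
`∫_Ω (1/2)(c + det DF / c)`, with equality iff `DF` is symmetric with `det DF = c²` on `Ω`. -/
theorem stmt9 (n : ℕ) (Ω : Set (Fin n → ℝ)) (hΩo : IsOpen Ω)
    (hΩb : Bornology.IsBounded Ω) (hΩm : MeasurableSet Ω)
    (F : (Fin n → ℝ) → (Fin n → ℝ)) (hF : ContDiffOn ℝ 1 F Ω)
    (c : ℝ) (hc : 0 < c)
    (DF : (Fin n → ℝ) → Matrix (Fin n) (Fin n) ℝ)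
    (hDF : ∀ x ∈ Ω, ∀ i j, DF x i j = fderiv ℝ F x (Pi.single j 1) i)
    (hsp : ∀ x ∈ Ω, ((1 / 2 : ℝ) • (DF x + (DF x)ᵀ)).PosDef)
    (hint1 : IntegrableOn (fun x => Real.sqrt (((1 / 2 : ℝ) • (DF x + (DF x)ᵀ)).det)) Ω volume)
    (hint2 : IntegrableOn (fun x => (1 / 2) * (c + (DF x).det / c)) Ω volume) :
    (∫ x in Ω, Real.sqrt (((1 / 2 : ℝ) • (DF x + (DF x)ᵀ)).det)) ≤
        ∫ x in Ω, (1 / 2) * (c + (DF x).det / c) ∧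
      ((∫ x in Ω, Real.sqrt (((1 / 2 : ℝ) • (DF x + (DF x)ᵀ)).det)) =
          (∫ x in Ω, (1 / 2) * (c + (DF x).det / c)) ↔
        ∀ x ∈ Ω, DF x = (DF x)ᵀ ∧ (DF x).det = c ^ 2) := by
  have hpt : ∀ x ∈ Ω,
      Real.sqrt (((1 / 2 : ℝ) • (DF x + (DF x)ᵀ)).det) ≤ (1/2) * (c + (DF x).det / c) ∧
        (Real.sqrt (((1 / 2 : ℝ) • (DF x + (DF x)ᵀ)).det) = (1/2) * (c + (DF x).det / c) ↔
          DF x = (DF x)ᵀ ∧ (DF x).det = c ^ 2) :=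
    fun x hx => pointwise_ineq (hsp x hx) hc
  have hle := setIntegral_mono_on hint1 hint2 hΩm (fun x hx => (hpt x hx).1)
  refine ⟨hle, ?_, ?_⟩
  · intro heq
    -- continuity of the integrands on Ω
    have hfder : ContinuousOn (fderiv ℝ F) Ω := hF.continuousOn_fderiv_of_isOpen hΩo le_rfl
    have hDFc : ContinuousOn DF Ω := by
      apply continuousOn_pi.mpr; intro i; apply continuousOn_pi.mpr; intro j
      exact ((continuous_apply i).comp_continuousOn
        (hfder.clm_apply continuousOn_const)).congr fun x hx => hDF x hx i j
    have hDFtc : ContinuousOn (fun x => (DF x)ᵀ) Ω :=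
      (Continuous.matrix_transpose continuous_id).comp_continuousOn hDFc
    have hScont : ContinuousOn (fun x => ((1 / 2 : ℝ) • (DF x + (DF x)ᵀ))) Ω :=
      (hDFc.add hDFtc).const_smul (1 / 2 : ℝ)
    have hfc : ContinuousOn
        (fun x => Real.sqrt (((1 / 2 : ℝ) • (DF x + (DF x)ᵀ)).det)) Ω :=
      Real.continuous_sqrt.comp_continuousOn
        ((Continuous.matrix_det continuous_id).comp_continuousOn hScont)
    have hgc : ContinuousOn (fun x => (1/2 : ℝ) * (c + (DF x).det / c)) Ω :=
      continuousOn_const.mul (continuousOn_const.add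
        (((Continuous.matrix_det continuous_id).comp_continuousOn hDFc).div_const c))
    have hhc : ContinuousOn
        (fun x => (1/2 : ℝ) * (c + (DF x).det / c)
          - Real.sqrt (((1 / 2 : ℝ) • (DF x + (DF x)ᵀ)).det)) Ω := hgc.sub hfc
    -- the difference has zero integral, is nonnegative, hence a.e. zero
    have hintsub : Integrable
        (fun x => (1/2 : ℝ) * (c + (DF x).det / c)
          - Real.sqrt (((1 / 2 : ℝ) • (DF x + (DF x)ᵀ)).det)) (volume.restrict Ω) :=
      hint2.sub hint1
    have hnn : 0 ≤ᵐ[volume.restrict Ω]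
        (fun x => (1/2 : ℝ) * (c + (DF x).det / c)
          - Real.sqrt (((1 / 2 : ℝ) • (DF x + (DF x)ᵀ)).det)) :=
      (ae_restrict_iff' hΩm).mpr (.of_forall fun x hx => sub_nonneg.mpr (hpt x hx).1)
    have hzero : (∫ x in Ω, ((1/2 : ℝ) * (c + (DF x).det / c)
        - Real.sqrt (((1 / 2 : ℝ) • (DF x + (DF x)ᵀ)).det))) = 0 := by
      rw [integral_sub hint2 hint1, heq, sub_self]
    have hae0 := (integral_eq_zero_iff_of_nonneg_ae hnn hintsub).mp hzero
    have hnull : volume.restrict Ω {x | ¬ ((1/2 : ℝ) * (c + (DF x).det / c)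
        - Real.sqrt (((1 / 2 : ℝ) • (DF x + (DF x)ᵀ)).det)) = 0} = 0 := by
      simpa [Filter.EventuallyEq, ae_iff] using hae0
    intro x hx
    have hfg : Real.sqrt (((1 / 2 : ℝ) • (DF x + (DF x)ᵀ)).det)
        = (1/2) * (c + (DF x).det / c) := by
      by_contra hne
      have hlt : 0 < (1/2 : ℝ) * (c + (DF x).det / c)
          - Real.sqrt (((1 / 2 : ℝ) • (DF x + (DF x)ᵀ)).det) :=
        sub_pos.mpr (lt_of_le_of_ne (hpt x hx).1 hne)
      set V : Set (Fin n → ℝ) := Ω ∩ (fun y => (1/2 : ℝ) * (c + (DF y).det / c)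
          - Real.sqrt (((1 / 2 : ℝ) • (DF y + (DF y)ᵀ)).det)) ⁻¹' Set.Ioi 0 with hVdef
      have hVopen : IsOpen V := hhc.isOpen_inter_preimage hΩo isOpen_Ioi
      have hxV : x ∈ V := ⟨hx, hlt⟩
      have hVpos : 0 < volume V := hVopen.measure_pos volume ⟨x, hxV⟩
      have hVsub : V ⊆ {y | ¬ ((1/2 : ℝ) * (c + (DF y).det / c)
          - Real.sqrt (((1 / 2 : ℝ) • (DF y + (DF y)ᵀ)).det)) = 0} :=
        fun y hy => ne_of_gt hy.2
      have hV0 : volume.restrict Ω V = 0 := measure_mono_null hVsub hnull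
      rw [Measure.restrict_apply' hΩm,
        Set.inter_eq_self_of_subset_left (Set.inter_subset_left)] at hV0
      exact absurd hV0 (ne_of_gt hVpos)
    exact (hpt x hx).2.mp hfg
  · intro hcond
    exact setIntegral_congr_fun hΩm fun x hx => (hpt x hx).2.mpr (hcond x hx)
end

section
/- For t ∈ [0, π/2] \ {π/4}, the linear map φ_t on ℝⁿ×ℝⁿ given by φ_t(x,y) = (σx + τy, τx + σy) satisfies: for t < π/4, φ_t*g₀ = (a suitable positive multiple of) g_t, i.e., g_t(v,w) = c_t · g₀(φ_t v, φ_t w) for all v,w, where g_t = cos t · 2dxdy + sin t · δ₀ and c_t is a positive constant; moreover φ_t commutes with the standard symplectic form up to a positive factor, hence maps Lagrangian planes to Lagrangian planes. -/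
/-!
With `A = cos t + sin t` and `B = cos t - sin t`, both positive for `t ∈ [0, π/4)`, the
coefficients satisfy `σ² + τ² = cos t`, `2στ = sin t` and `σ² - τ² = √A √B > 0`. Expanding
bilinearly, `φ` pulls `g₀` back to `(σ² + τ²) g₀ + 2στ δ₀ = g_t` (so `c = 1`), and it pulls `ω`
back to `(σ² - τ²) ω`.
-/

open Real Matrix

section Coefficients

variable {A B : ℝ}

lemma half_sqrt_add_sq_add_half_sqrt_sub_sq (hA : 0 ≤ A) (hB : 0 ≤ B) :
    ((√A + √B) / 2) ^ 2 + ((√A - √B) / 2) ^ 2 = (A + B) / 2 := by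
  nlinarith [sq_sqrt hA, sq_sqrt hB]

lemma two_mul_half_sqrt_add_mul_half_sqrt_sub (hA : 0 ≤ A) (hB : 0 ≤ B) :
    2 * ((√A + √B) / 2 * ((√A - √B) / 2)) = (A - B) / 2 := by
  nlinarith [sq_sqrt hA, sq_sqrt hB]

lemma half_sqrt_add_sq_sub_half_sqrt_sub_sq :
    ((√A + √B) / 2) ^ 2 - ((√A - √B) / 2) ^ 2 = √A * √B := by
  ring

end Coefficients

lemma sin_lt_cos_of_mem_Ico {t : ℝ} (ht : t ∈ Set.Ico 0 (π / 4)) : sin t < cos t := by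
  rw [← sin_pi_div_two_sub]
  exact sin_lt_sin_of_lt_of_le_pi_div_two (by linarith [ht.1, pi_pos])
    (by linarith [ht.1]) (by linarith [ht.2])

section Mix

variable {ι : Type*} [Fintype ι]

def mix (σ τ : ℝ) (v : (ι → ℝ) × (ι → ℝ)) : (ι → ℝ) × (ι → ℝ) :=
  (σ • v.1 + τ • v.2, τ • v.1 + σ • v.2)

lemma mix_fst_dotProduct_mix_snd (σ τ : ℝ) (v w : (ι → ℝ) × (ι → ℝ)) :
    (mix σ τ v).1 ⬝ᵥ (mix σ τ w).2 =
      σ * τ * (v.1 ⬝ᵥ w.1) + σ ^ 2 * (v.1 ⬝ᵥ w.2) + τ ^ 2 * (v.2 ⬝ᵥ w.1)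
        + σ * τ * (v.2 ⬝ᵥ w.2) := by
  simp only [mix, add_dotProduct, dotProduct_add, smul_dotProduct, dotProduct_smul, smul_eq_mul]
  ring

lemma mix_pullback_split (σ τ : ℝ) (v w : (ι → ℝ) × (ι → ℝ)) :
    (mix σ τ v).1 ⬝ᵥ (mix σ τ w).2 + (mix σ τ w).1 ⬝ᵥ (mix σ τ v).2 =
      (σ ^ 2 + τ ^ 2) * (v.1 ⬝ᵥ w.2 + w.1 ⬝ᵥ v.2)
        + 2 * (σ * τ) * (v.1 ⬝ᵥ w.1 + v.2 ⬝ᵥ w.2) := by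
  rw [mix_fst_dotProduct_mix_snd, mix_fst_dotProduct_mix_snd, dotProduct_comm w.1 v.1,
    dotProduct_comm w.2 v.2, dotProduct_comm w.2 v.1, dotProduct_comm v.2 w.1]
  ring

lemma mix_pullback_symplectic (σ τ : ℝ) (v w : (ι → ℝ) × (ι → ℝ)) :
    (mix σ τ v).1 ⬝ᵥ (mix σ τ w).2 - (mix σ τ w).1 ⬝ᵥ (mix σ τ v).2 =
      (σ ^ 2 - τ ^ 2) * (v.1 ⬝ᵥ w.2 - w.1 ⬝ᵥ v.2) := by
  rw [mix_fst_dotProduct_mix_snd, mix_fst_dotProduct_mix_snd, dotProduct_comm w.1 v.1,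
    dotProduct_comm w.2 v.2, dotProduct_comm w.2 v.1, dotProduct_comm v.2 w.1]
  ring

end Mix

/-- For `t ∈ [0, π/4)`, the map `φ_t(x,y) = (σx + τy, τx + σy)` pulls back the
pseudo-Euclidean metric `g₀ = 2dxdy` to a positive multiple of
`g_t = cos t · 2dxdy + sin t · δ₀`; moreover `φ_t` scales the standard symplectic form by a
positive factor, hence maps isotropic (Lagrangian) directions to isotropic directions. -/
theorem stmt16 (n : ℕ) (t : ℝ) (ht : t ∈ Set.Ico 0 (π / 4))
    (σ τ : ℝ)
    (hσ : σ = (Real.sqrt (Real.cos t + Real.sin t) + Real.sqrt |Real.cos t - Real.sin t|) / 2)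
    (hτ : τ = (Real.sqrt (Real.cos t + Real.sin t) - Real.sqrt |Real.cos t - Real.sin t|) / 2)
    (φ : (Fin n → ℝ) × (Fin n → ℝ) → (Fin n → ℝ) × (Fin n → ℝ))
    (hφ : ∀ v, φ v = (fun i => σ * v.1 i + τ * v.2 i, fun i => τ * v.1 i + σ * v.2 i))
    (g0 δ0 gt ω : ((Fin n → ℝ) × (Fin n → ℝ)) → ((Fin n → ℝ) × (Fin n → ℝ)) → ℝ)
    (hg0 : ∀ v w, g0 v w = (∑ i, v.1 i * w.2 i) + (∑ i, w.1 i * v.2 i))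
    (hδ0 : ∀ v w, δ0 v w = (∑ i, v.1 i * w.1 i) + (∑ i, v.2 i * w.2 i))
    (hgt : ∀ v w, gt v w = Real.cos t * g0 v w + Real.sin t * δ0 v w)
    (hω : ∀ v w, ω v w = (∑ i, v.1 i * w.2 i) - (∑ i, w.1 i * v.2 i)) :
    (∃ c : ℝ, 0 < c ∧ ∀ v w, gt v w = c * g0 (φ v) (φ w)) ∧
      (∃ d : ℝ, 0 < d ∧ ∀ v w, ω (φ v) (φ w) = d * ω v w) ∧
      (∀ v w, ω v w = 0 → ω (φ v) (φ w) = 0) := by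
  have hsin : 0 ≤ sin t := sin_nonneg_of_nonneg_of_le_pi ht.1 (by linarith [ht.2, pi_pos])
  have hB : 0 < cos t - sin t := sub_pos.2 (sin_lt_cos_of_mem_Ico ht)
  have hA : 0 < cos t + sin t := by linarith
  rw [abs_of_pos hB] at hσ hτ
  have hsq_add : σ ^ 2 + τ ^ 2 = cos t := by
    rw [hσ, hτ, half_sqrt_add_sq_add_half_sqrt_sub_sq hA.le hB.le]; ring
  have hmul : 2 * (σ * τ) = sin t := by
    rw [hσ, hτ, two_mul_half_sqrt_add_mul_half_sqrt_sub hA.le hB.le]; ring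
  have hsq_sub : 0 < σ ^ 2 - τ ^ 2 := by
    rw [hσ, hτ, half_sqrt_add_sq_sub_half_sqrt_sub_sq]; positivity
  obtain rfl : φ = mix σ τ := funext hφ
  have hωφ (v w) : ω (mix σ τ v) (mix σ τ w) = (σ ^ 2 - τ ^ 2) * ω v w := by
    rw [hω, hω]
    exact mix_pullback_symplectic σ τ v w
  refine ⟨⟨1, one_pos, fun v w => ?_⟩, ⟨_, hsq_sub, hωφ⟩, fun v w h => by rw [hωφ, h, mul_zero]⟩
  rw [one_mul, hgt, hg0, hg0, hδ0, ← hsq_add, ← hmul]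
  exact (mix_pullback_split σ τ v w).symm
end
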